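/- arXiv:1702.02060 — 2 statements merged into one kernel-verified Lean document; each statement's English description precedes it below -/
import Mathlib

section
/- Let t ≥ 2 and let m_1, m_2, …, m_t be positive integers with m_1 = max{m_1,…,m_t}. Then μ(K_{m_1,…,m_t}) = Σ_{i=2}^{t} m_i(m_i−1)/2. -/
open SimpleGraph

/-- `f` is a `k`-ranking of `G`: labels lie in `{1,…,k}` and whenever two distinct
vertices get the same label, every path connecting them contains a vertex of
strictly larger label. -/
def IsRanking {V : Type*} (G : SimpleGraph V) (k : ℕ) (f : V → ℕ) : Prop :=
  (∀ v, 1 ≤ f v ∧ f v ≤ k) ∧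
  ∀ u v, u ≠ v → f u = f v → ∀ p : G.Walk u v, p.IsPath → ∃ w ∈ p.support, f u < f w

/-- The rank number `χᵣ(G)`: the least `k` such that `G` admits a `k`-ranking. -/
noncomputable def rankNumber {V : Type*} (G : SimpleGraph V) : ℕ :=
  sInf {k | ∃ f : V → ℕ, IsRanking G k f}

/-- `μ(G)`: the maximum cardinality of a set `S` of edges on `V(G)` (non-loops,
disjoint from `E(G)`) such that `χᵣ(G ∪ S) = χᵣ(G)`. -/
noncomputable def mu {V : Type*} (G : SimpleGraph V) : ℕ :=
  sSup {N | ∃ S : Finset (Sym2 V), S.card = N ∧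
    (∀ e ∈ S, ¬e.IsDiag ∧ e ∉ G.edgeSet) ∧
    rankNumber (G ⊔ SimpleGraph.fromEdgeSet (S : Set (Sym2 V))) = rankNumber G}

/-!
A ranking of a supergraph `G` of `K = K_{m_1,…,m_t}` can repeat a label only inside one part,
and a repeated label is smaller than every label outside that part: two vertices with equal
labels are non-adjacent, hence in the same part, and any vertex outside that part joins them by
a path of length two. So all vertices outside some part `P` carry distinct labels, which forces
at least `n - m_P + 1 ≥ n - m_1 + 1` labels; conversely, if a largest part is independent in `G`,
labelling it `1` and the other vertices injectively by `2, 3, …` attains this bound.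
Hence `χᵣ(K ∪ S) = χᵣ(K)` exactly when some largest part `P` stays independent in `K ∪ S`,
i.e. when `S` consists of pairs inside the other parts; there are `∑_{i ≠ P} C(m_i, 2)` of them.
-/

open Finset

section Ranking

variable {V : Type*} {G : SimpleGraph V} {k : ℕ} {f : V → ℕ}

namespace IsRanking

theorem not_adj (hf : IsRanking G k f) {u v : V} (huv : u ≠ v) (h : f u = f v) :
    ¬G.Adj u v := by
  intro hadj
  obtain ⟨w, hw, hlt⟩ := hf.2 u v huv h (.cons hadj .nil) (by simp [huv])
  simp only [Walk.support_cons, Walk.support_nil, List.mem_cons, List.not_mem_nil,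
    or_false] at hw
  rcases hw with rfl | rfl <;> omega

theorem lt_of_adj_of_adj (hf : IsRanking G k f) {u v w : V} (huv : u ≠ v) (h : f u = f v)
    (huw : G.Adj u w) (hwv : G.Adj w v) : f u < f w := by
  obtain ⟨x, hx, hlt⟩ := hf.2 u v huv h (.cons huw (.cons hwv .nil))
    (by simp [Walk.cons_isPath_iff, huv, huw.ne, hwv.ne])
  simp only [Walk.support_cons, Walk.support_nil, List.mem_cons, List.not_mem_nil,
    or_false] at hx
  rcases hx with rfl | rfl | rfl <;> omega

theorem card_image_le (hf : IsRanking G k f) (s : Finset V) : #(s.image f) ≤ k := by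
  have hsub : s.image f ⊆ Icc 1 k := by
    simp only [subset_iff, mem_image, mem_Icc]
    rintro _ ⟨v, -, rfl⟩
    exact hf.1 v
  simpa using card_le_card hsub

end IsRanking

theorem exists_isRanking_of_isIndepSet [Finite V] {s : Set V} (hs : G.IsIndepSet s) :
    ∃ f, IsRanking G (sᶜ.ncard + 1) f := by
  classical
  let e := Finite.equivFin (sᶜ : Set V)
  have he : ∀ v (hv : v ∉ s), (e ⟨v, hv⟩ : ℕ) < sᶜ.ncard :=
    fun v hv => (e ⟨v, hv⟩).2
  refine ⟨fun v => if hv : v ∈ s then 1 else e ⟨v, hv⟩ + 2, fun v => ?_, ?_⟩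
  · by_cases hv : v ∈ s
    · simp [hv]
    · have := he v hv
      simp only [hv, dite_false]
      omega
  · intro u v huv h p _
    by_cases hu : u ∈ s <;> by_cases hv : v ∈ s <;>
      simp only [hu, hv, dite_true, dite_false] at h ⊢
    · cases p with
      | nil => exact absurd rfl huv
      | @cons _ x _ hux q =>
        have hx : x ∉ s := fun hx => hs hu hx hux.ne hux
        exact ⟨x, by simp, by simp [hx]⟩
    · omega
    · omega
    · have : e ⟨u, hu⟩ = e ⟨v, hv⟩ := Fin.ext (by omega)
      exact absurd (congrArg Subtype.val (e.injective this)) huv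

theorem rankNumber_le (hf : IsRanking G k f) : rankNumber G ≤ k :=
  Nat.sInf_le ⟨f, hf⟩

theorem exists_isRanking_rankNumber [Finite V] (G : SimpleGraph V) :
    ∃ f, IsRanking G (rankNumber G) f :=
  Nat.sInf_mem (s := {k | ∃ f, IsRanking G k f})
    ⟨_, exists_isRanking_of_isIndepSet (G := G) (Set.pairwise_empty _)⟩

end Ranking

theorem Finset.sum_erase_add_eq {β M : Type*} [DecidableEq β] [AddCommMonoid M] {s : Finset β}
    (g : β → M) {i j : β} (hi : i ∈ s) (hj : j ∈ s) :
    ∑ x ∈ s.erase i, g x + g i = ∑ x ∈ s.erase j, g x + g j :=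
  (sum_erase_add s g hi).trans (sum_erase_add s g hj).symm

section Multipartite

variable {ι : Type*} {α : ι → Type*} {G : SimpleGraph (Σ i, α i)} {k : ℕ}
  {f : (Σ i, α i) → ℕ}

namespace IsRanking

variable (hK : completeMultipartiteGraph α ≤ G) (hf : IsRanking G k f)
include hK hf

theorem fst_eq {u v : Σ i, α i} (huv : u ≠ v) (h : f u = f v) : u.1 = v.1 :=
  not_not.1 fun hne => hf.not_adj huv h (hK hne)

theorem lt_of_fst_ne {u v w : Σ i, α i} (huv : u ≠ v) (h : f u = f v) (hw : w.1 ≠ u.1) :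
    f u < f w :=
  hf.lt_of_adj_of_adj huv h (hK hw.symm) (hK (show w.1 ≠ v.1 by rwa [← hf.fst_eq hK huv h]))

theorem injOn_of_fst_ne {u v : Σ i, α i} (huv : u ≠ v) (h : f u = f v) :
    Set.InjOn f {w | w.1 ≠ u.1} := by
  intro w hw w' hw' hww'
  by_contra hne
  have h₁ := hf.lt_of_fst_ne hK huv h hw
  have h₂ := hf.lt_of_fst_ne hK hne hww' (w := u) fun hu => hw hu.symm
  omega

theorem exists_injOn (i₀ : ι) [Nonempty (α i₀)] :
    ∃ P, Nonempty (α P) ∧ Set.InjOn f {w | w.1 ≠ P} := by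
  by_cases hinj : Function.Injective f
  · exact ⟨i₀, ‹_›, hinj.injOn⟩
  · obtain ⟨u, v, h, huv⟩ := Function.not_injective_iff.1 hinj
    exact ⟨u.1, ⟨u.2⟩, hf.injOn_of_fst_ne hK huv h⟩

end IsRanking

variable [Fintype ι] [DecidableEq ι] [∀ i, Fintype (α i)]

theorem coe_sigma_univ_erase (P : ι) :
    ((univ.erase P).sigma fun i => (univ : Finset (α i)) : Set (Σ i, α i)) =
      {v | v.1 ≠ P} := by
  ext; simp

theorem IsRanking.card_image_part_add_sum_le (hK : completeMultipartiteGraph α ≤ G)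
    (hf : IsRanking G k f) {P : ι} (hinj : Set.InjOn f {w | w.1 ≠ P}) :
    #(univ.image fun a : α P => f ⟨P, a⟩) + ∑ i ∈ univ.erase P, Fintype.card (α i) ≤
      k := by
  set B := (univ.erase P).sigma fun i => (univ : Finset (α i))
  have hB : #(B.image f) = ∑ i ∈ univ.erase P, Fintype.card (α i) := by
    rw [card_image_of_injOn (by rwa [coe_sigma_univ_erase]), card_sigma]
    rfl
  have hdisj : Disjoint (univ.image fun a : α P => f ⟨P, a⟩) (B.image f) := by
    simp only [Finset.disjoint_left, mem_image, mem_univ, true_and, B, mem_sigma, mem_erase,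
      and_true]
    rintro _ ⟨a, rfl⟩ ⟨b, hb, hfb⟩
    exact hb (hf.fst_eq hK (fun h => hb (congrArg Sigma.fst h)) hfb)
  have hsub : (univ.image fun a : α P => f ⟨P, a⟩) ⊆ univ.image f := by
    intro c hc
    obtain ⟨a, -, rfl⟩ := mem_image.1 hc
    exact mem_image_of_mem f (mem_univ _)
  calc _ = #((univ.image fun a : α P => f ⟨P, a⟩) ∪ B.image f) := by
        rw [card_union_of_disjoint hdisj, hB]
    _ ≤ #(univ.image f) := card_le_card (union_subset hsub (image_subset_image (subset_univ _)))
    _ ≤ k := hf.card_image_le univ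

theorem IsRanking.exists_card_image_part_add_sum_le (hK : completeMultipartiteGraph α ≤ G)
    (hf : IsRanking G k f) (i₀ : ι) [Nonempty (α i₀)] :
    ∃ P, 0 < #(univ.image fun a : α P => f ⟨P, a⟩) ∧
      #(univ.image fun a : α P => f ⟨P, a⟩) + ∑ i ∈ univ.erase P, Fintype.card (α i) ≤
        k := by
  obtain ⟨P, hP, hinj⟩ := hf.exists_injOn hK i₀
  exact ⟨P, by simp [univ_nonempty], hf.card_image_part_add_sum_le hK hinj⟩

variable {i₁ : ι} (hmax : ∀ i, Fintype.card (α i) ≤ Fintype.card (α i₁))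
  [Nonempty (α i₁)]
include hmax

theorem IsRanking.sum_erase_lt (hK : completeMultipartiteGraph α ≤ G) (hf : IsRanking G k f) :
    ∑ i ∈ univ.erase i₁, Fintype.card (α i) < k := by
  obtain ⟨P, hpos, hle⟩ := hf.exists_card_image_part_add_sum_le hK i₁
  have := sum_erase_add_eq (fun i => Fintype.card (α i)) (mem_univ P) (mem_univ i₁)
  have := hmax P
  omega

theorem IsRanking.exists_isIndepSet (hK : completeMultipartiteGraph α ≤ G)
    (hf : IsRanking G (∑ i ∈ univ.erase i₁, Fintype.card (α i) + 1) f) :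
    ∃ P, Fintype.card (α P) = Fintype.card (α i₁) ∧ G.IsIndepSet {v | v.1 = P} := by
  obtain ⟨P, hpos, hle⟩ := hf.exists_card_image_part_add_sum_le hK i₁
  have := sum_erase_add_eq (fun i => Fintype.card (α i)) (mem_univ P) (mem_univ i₁)
  have := hmax P
  -- with this few labels the part `P` has to be a largest one and carry a single label
  have hone : #(univ.image fun a : α P => f ⟨P, a⟩) ≤ 1 := by omega
  refine ⟨P, by omega, ?_⟩
  rintro ⟨_, a⟩ rfl ⟨_, b⟩ rfl hne
  exact hf.not_adj hne (card_le_one.1 hone _ (mem_image_of_mem _ (mem_univ a)) _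
    (mem_image_of_mem _ (mem_univ b)))

theorem rankNumber_eq_sum_erase_add_one (hK : completeMultipartiteGraph α ≤ G)
    (hind : G.IsIndepSet {v | v.1 = i₁}) :
    rankNumber G = ∑ i ∈ univ.erase i₁, Fintype.card (α i) + 1 := by
  refine le_antisymm ?_ ?_
  · obtain ⟨f, hf⟩ := exists_isRanking_of_isIndepSet hind
    have hcard : {v : Σ i, α i | v.1 = i₁}ᶜ.ncard =
        ∑ i ∈ univ.erase i₁, Fintype.card (α i) := by
      rw [Set.compl_ofPred, ← coe_sigma_univ_erase, Set.ncard_coe_finset, card_sigma]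
      rfl
    exact hcard ▸ rankNumber_le hf
  · obtain ⟨f, hf⟩ := exists_isRanking_rankNumber G
    exact hf.sum_erase_lt hmax hK

end Multipartite

section IntraPart

variable {ι : Type*} {α : ι → Type*}

def intraPartGraphExcept (α : ι → Type*) (P : ι) : SimpleGraph (Σ i, α i) where
  Adj u v := u.1 = v.1 ∧ u.1 ≠ P ∧ u ≠ v
  symm := ⟨fun _ _ h => ⟨h.1.symm, h.1 ▸ h.2.1, h.2.2.symm⟩⟩
  loopless := ⟨fun _ h => h.2.2 rfl⟩

@[simp]
theorem intraPartGraphExcept_adj {P : ι} {u v : Σ i, α i} :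
    (intraPartGraphExcept α P).Adj u v ↔ u.1 = v.1 ∧ u.1 ≠ P ∧ u ≠ v :=
  Iff.rfl

instance [DecidableEq ι] [∀ i, DecidableEq (α i)] (P : ι) :
    DecidableRel (intraPartGraphExcept α P).Adj :=
  fun u v => inferInstanceAs (Decidable (u.1 = v.1 ∧ u.1 ≠ P ∧ u ≠ v))

theorem subset_edgeSet_intraPartGraphExcept {S : Set (Sym2 (Σ i, α i))}
    (hS : ∀ e ∈ S, ¬e.IsDiag ∧ e ∉ (completeMultipartiteGraph α).edgeSet) {P : ι}
    (hind : (completeMultipartiteGraph α ⊔ fromEdgeSet S).IsIndepSet {v | v.1 = P}) :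
    S ⊆ (intraPartGraphExcept α P).edgeSet := by
  intro e he
  induction e using Sym2.ind with
  | _ u v =>
    obtain ⟨hdiag, hK⟩ := hS _ he
    have huv : u ≠ v := fun h => hdiag (Sym2.mk_isDiag_iff.2 h)
    have hfst : u.1 = v.1 := not_not.1 hK
    refine ⟨hfst, fun hu => hind hu (hfst ▸ hu : v.1 = P) huv ?_, huv⟩
    exact Or.inr ⟨he, huv⟩

theorem isIndepSet_sup_intraPartGraphExcept (P : ι) :
    (completeMultipartiteGraph α ⊔ intraPartGraphExcept α P).IsIndepSet {v | v.1 = P} := by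
  rintro u (hu : u.1 = P) v (hv : v.1 = P) - (h | h)
  · exact h (hu.trans hv.symm)
  · exact h.2.1 hu

variable [Fintype ι] [DecidableEq ι] [∀ i, Fintype (α i)] [∀ i, DecidableEq (α i)]

theorem neighborFinset_intraPartGraphExcept (P i : ι) (a : α i) :
    (intraPartGraphExcept α P).neighborFinset ⟨i, a⟩ =
      if i = P then ∅ else (univ.erase a).map (Function.Embedding.sigmaMk i) := by
  ext ⟨j, b⟩
  split_ifs with h
  · simp [h]
  · simp only [mem_neighborFinset, intraPartGraphExcept_adj, mem_map, mem_erase]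
    constructor
    · rintro ⟨rfl, -, hne⟩
      exact ⟨b, ⟨fun hab => hne (hab ▸ rfl), mem_univ b⟩, rfl⟩
    · rintro ⟨c, ⟨hc, -⟩, hcb⟩
      cases hcb
      exact ⟨rfl, h, fun hab => hc (eq_of_heq (Sigma.mk.inj hab).2).symm⟩

theorem card_edgeFinset_intraPartGraphExcept (P : ι) :
    #(intraPartGraphExcept α P).edgeFinset =
      ∑ i ∈ univ.erase P, (Fintype.card (α i)).choose 2 := by
  have h := sum_degrees_eq_twice_card_edges (intraPartGraphExcept α P)
  simp only [← card_neighborFinset_eq_degree, Fintype.sum_sigma,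
    neighborFinset_intraPartGraphExcept, apply_ite card, card_empty, card_map,
    card_erase_of_mem (mem_univ _), card_univ, sum_const, smul_eq_mul] at h
  rw [← sum_erase_add _ _ (mem_univ P), if_pos rfl, mul_zero, add_zero] at h
  suffices hsum : ∑ i ∈ univ.erase P,
      Fintype.card (α i) * (if i = P then 0 else Fintype.card (α i) - 1) =
        2 * ∑ i ∈ univ.erase P, (Fintype.card (α i)).choose 2 by omega
  rw [mul_sum]
  refine sum_congr rfl fun i hi => ?_
  rw [if_neg (ne_of_mem_erase hi), Nat.choose_two_right,
    Nat.mul_div_cancel' (Nat.even_mul_pred_self _).two_dvd]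

theorem mu_completeMultipartiteGraph {i₁ : ι}
    (hmax : ∀ i, Fintype.card (α i) ≤ Fintype.card (α i₁)) [Nonempty (α i₁)] :
    mu (completeMultipartiteGraph α) =
      ∑ i ∈ univ.erase i₁, (Fintype.card (α i)).choose 2 := by
  set K := completeMultipartiteGraph α
  have hK : rankNumber K = ∑ i ∈ univ.erase i₁, Fintype.card (α i) + 1 :=
    rankNumber_eq_sum_erase_add_one hmax le_rfl fun u hu v hv _ h => h (hu.trans hv.symm)
  refine IsGreatest.csSup_eq ⟨⟨(intraPartGraphExcept α i₁).edgeFinset,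
    card_edgeFinset_intraPartGraphExcept i₁, fun e he => ?_, ?_⟩, ?_⟩
  · rw [mem_edgeFinset] at he
    induction e using Sym2.ind with
    | _ u v => exact ⟨fun h => he.2.2 (Sym2.mk_isDiag_iff.1 h), fun h => h he.1⟩
  · rw [coe_edgeFinset, fromEdgeSet_edgeSet, hK]
    exact rankNumber_eq_sum_erase_add_one hmax le_sup_left
      (isIndepSet_sup_intraPartGraphExcept i₁)
  · rintro _ ⟨S, rfl, hS, hrank⟩
    obtain ⟨f, hf⟩ := exists_isRanking_rankNumber (K ⊔ fromEdgeSet ↑S)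
    rw [hrank, hK] at hf
    obtain ⟨P, hP, hind⟩ := hf.exists_isIndepSet hmax le_sup_left
    have hsum := sum_erase_add_eq (fun i => (Fintype.card (α i)).choose 2)
      (mem_univ P) (mem_univ i₁)
    simp only [hP, add_left_inj] at hsum
    calc #S ≤ #(intraPartGraphExcept α P).edgeFinset := by
          refine card_le_card ?_
          rw [← coe_subset, coe_edgeFinset]
          exact subset_edgeSet_intraPartGraphExcept hS hind
      _ = _ := by rw [card_edgeFinset_intraPartGraphExcept, hsum]

end IntraPart

theorem mu_multipartite_general (t : ℕ) (m : Fin t → ℕ)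
    (hm : ∀ i, 1 ≤ m i) (i₁ : Fin t) (hmax : ∀ i, m i ≤ m i₁) :
    mu (SimpleGraph.completeMultipartiteGraph fun i => Fin (m i)) =
      ∑ i ∈ Finset.univ.erase i₁, m i * (m i - 1) / 2 := by
  have : Nonempty (Fin (m i₁)) := ⟨⟨0, hm i₁⟩⟩
  rw [mu_completeMultipartiteGraph (i₁ := i₁) (by simpa using hmax)]
  simp only [Fintype.card_fin, Nat.choose_two_right]

/-- for the complete multipartite graph with parts `Vᵢ = Fin (m i)` of
sizes `m i ≥ 1` (at least two parts), where the part indexed `i₁` has maximum size,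
`μ(K_{m_1,…,m_t}) = ∑_{i ≠ i₁} m i (m i - 1) / 2`. -/
theorem mu_multipartite (t : ℕ) (ht : 2 ≤ t) (m : Fin t → ℕ)
    (hm : ∀ i, 1 ≤ m i) (i₁ : Fin t) (hmax : ∀ i, m i ≤ m i₁) :
    mu (SimpleGraph.completeMultipartiteGraph fun i => Fin (m i)) =
      ∑ i ∈ Finset.univ.erase i₁, m i * (m i - 1) / 2 :=
  mu_multipartite_general t m hm i₁ hmax
end

section
/- For every integer n ≥ 2, the rank number of G_n, the graph obtained from two disjoint copies of the complete graph K_n joined by a single edge, equals n+1. -/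
open SimpleGraph

/-- `G_n`: two disjoint copies of the complete graph `K_n`, with vertex sets
`W = {w_1, …, w_n}` (the left summand, `wᵢ = Sum.inl ⟨i - 1, _⟩`) and
`V = {v_1, …, v_n}` (the right summand, `vᵢ = Sum.inr ⟨i - 1, _⟩`), joined by the
single edge `w_1 v_n`. -/
def twoCliques (n : ℕ) : SimpleGraph (Fin n ⊕ Fin n) :=
  SimpleGraph.fromRel (fun a b =>
    (∃ i j : Fin n, a = Sum.inl i ∧ b = Sum.inl j) ∨
    (∃ i j : Fin n, a = Sum.inr i ∧ b = Sum.inr j) ∨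
    (∃ i j : Fin n, i.val = 0 ∧ j.val = n - 1 ∧ a = Sum.inl i ∧ b = Sum.inr j))

/-!
Within a clique a ranking is injective, so a ranking with at most `n` labels uses every label on
each clique, in particular the top one; the two vertices carrying the top label are then joined by
a path containing no larger label. Conversely, labelling both cliques `1, …, n` and raising `vₙ`
to `n + 1` is a ranking, because every path between the cliques passes through `vₙ`.
-/

lemma SimpleGraph.IsClique.reachable {V : Type*} {G : SimpleGraph V} {s : Set V}
    (hs : G.IsClique s) {u v : V} (hu : u ∈ s) (hv : v ∈ s) : G.Reachable u v := by
  obtain rfl | hne := eq_or_ne u v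
  · rfl
  · exact (hs hu hv hne).reachable

namespace IsRanking

variable {V : Type*} {G : SimpleGraph V} {k : ℕ} {f : V → ℕ}

lemma ne_of_adj (hf : IsRanking G k f) {u v : V} (h : G.Adj u v) : f u ≠ f v := by
  intro huv
  obtain ⟨w, hw, hlt⟩ := hf.2 u v h.ne huv h.toWalk h.isPath_toWalk
  rw [h.support_toWalk, List.mem_pair] at hw
  rcases hw with rfl | rfl <;> omega

lemma injOn_of_isClique (hf : IsRanking G k f) {s : Set V} (hs : G.IsClique s) :
    Set.InjOn f s := fun _ hu _ hv huv =>
  by_contra fun hne => hf.ne_of_adj (hs hu hv hne) huv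

lemma eq_of_reachable (hf : IsRanking G k f) {u v : V} (huv : G.Reachable u v)
    (hu : f u = k) (hv : f v = k) : u = v := by
  by_contra hne
  obtain ⟨p, hp⟩ := huv.exists_isPath
  obtain ⟨w, -, hlt⟩ := hf.2 u v hne (hu.trans hv.symm) p hp
  exact absurd (hf.1 w).2 (by omega)

lemma exists_eq_of_isClique (hf : IsRanking G k f) {s : Finset V} (hs : G.IsClique (s : Set V))
    (hne : s.Nonempty) (hk : k ≤ s.card) : ∃ v ∈ s, f v = k := by
  have hsub : s.image f ⊆ Finset.Icc 1 k := fun x hx => by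
    obtain ⟨v, -, rfl⟩ := Finset.mem_image.1 hx
    exact Finset.mem_Icc.2 (hf.1 v)
  have himage : s.image f = Finset.Icc 1 k := by
    refine Finset.eq_of_subset_of_card_le hsub ?_
    rw [Finset.card_image_of_injOn (hf.injOn_of_isClique hs), Nat.card_Icc]
    omega
  obtain ⟨v, hv⟩ := hne
  have hmem : k ∈ s.image f := himage ▸ Finset.mem_Icc.2 ⟨(hf.1 v).1.trans (hf.1 v).2, le_rfl⟩
  simpa using hmem

end IsRanking

lemma rankNumber_eq_of_isRanking {V : Type*} {G : SimpleGraph V} {k : ℕ} {f : V → ℕ}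
    (hf : IsRanking G k f) (hmin : ∀ m g, IsRanking G m g → k ≤ m) : rankNumber G = k :=
  le_antisymm (Nat.sInf_le ⟨f, hf⟩) (le_csInf ⟨k, f, hf⟩ fun _ ⟨g, hg⟩ => hmin _ g hg)

namespace twoCliques

variable {n : ℕ}

lemma adj_inl_inl {i j : Fin n} : (twoCliques n).Adj (.inl i) (.inl j) ↔ i ≠ j := by
  simp [twoCliques]

lemma adj_inr_inr {i j : Fin n} : (twoCliques n).Adj (.inr i) (.inr j) ↔ i ≠ j := by
  simp [twoCliques]

lemma adj_inl_inr {i j : Fin n} :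
    (twoCliques n).Adj (.inl i) (.inr j) ↔ i.val = 0 ∧ j.val = n - 1 := by
  simp [twoCliques]

lemma isClique_range_inl : (twoCliques n).IsClique (Set.range Sum.inl) := by
  rintro _ ⟨i, rfl⟩ _ ⟨j, rfl⟩ hne
  exact adj_inl_inl.2 fun h => hne (congrArg _ h)

lemma isClique_range_inr : (twoCliques n).IsClique (Set.range Sum.inr) := by
  rintro _ ⟨i, rfl⟩ _ ⟨j, rfl⟩ hne
  exact adj_inr_inr.2 fun h => hne (congrArg _ h)

lemma reachable_inl_inr (i j : Fin n) : (twoCliques n).Reachable (.inl i) (.inr j) := by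
  have := i.isLt
  have hw : (twoCliques n).Reachable (.inl i) (.inl ⟨0, i.pos⟩) :=
    isClique_range_inl.reachable ⟨i, rfl⟩ ⟨_, rfl⟩
  have hv : (twoCliques n).Reachable (.inr ⟨n - 1, by omega⟩) (.inr j) :=
    isClique_range_inr.reachable ⟨_, rfl⟩ ⟨j, rfl⟩
  exact hw.trans ((adj_inl_inr.2 ⟨rfl, rfl⟩).reachable.trans hv)

lemma inr_mem_support {i j c : Fin n} (p : (twoCliques n).Walk (.inl i) (.inr j))
    (hc : c.val = n - 1) : .inr c ∈ p.support := by
  obtain ⟨d, hd, hfst, hsnd⟩ := p.exists_boundary_dart (Set.range Sum.inl) ⟨i, rfl⟩ (by simp)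
  obtain ⟨a, ha⟩ := hfst
  obtain ⟨b, hb⟩ : ∃ b, d.snd = .inr b := by
    rcases h : d.snd with b | b
    · exact absurd ⟨b, h.symm⟩ hsnd
    · exact ⟨b, rfl⟩
  have hadj := d.adj
  rw [← ha, hb, adj_inl_inr] at hadj
  have hbc : b = c := Fin.ext (hadj.2.trans hc.symm)
  exact hbc ▸ hb ▸ p.dart_snd_mem_support_of_mem_darts hd

end twoCliques

def twoCliquesLabel (n : ℕ) : Fin n ⊕ Fin n → ℕ
  | .inl i => i + 1
  | .inr j => if j.val = n - 1 then n + 1 else j + 1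

lemma isRanking_twoCliquesLabel (n : ℕ) :
    IsRanking (twoCliques n) (n + 1) (twoCliquesLabel n) := by
  have hcross (i j : Fin n) (p : (twoCliques n).Walk (.inl i) (.inr j)) :
      ∃ w ∈ p.support, twoCliquesLabel n (.inl i) < twoCliquesLabel n w := by
    have := i.isLt
    exact ⟨_, twoCliques.inr_mem_support p (c := ⟨n - 1, by omega⟩) rfl, by
      simp [twoCliquesLabel]⟩
  refine ⟨fun v => ?_, ?_⟩
  · rcases v with i | j
    · simp only [twoCliquesLabel]
      omega
    · simp only [twoCliquesLabel]
      split_ifs <;> omega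
  · rintro (i | i) (j | j) hne heq p -
    · simp only [twoCliquesLabel, add_left_inj] at heq
      exact absurd (congrArg _ (Fin.ext heq)) hne
    · exact hcross i j p
    · obtain ⟨w, hw, hlt⟩ := hcross j i p.reverse
      exact ⟨w, by simpa using hw, heq ▸ hlt⟩
    · simp only [twoCliquesLabel] at heq
      refine absurd (congrArg _ (Fin.ext ?_)) hne
      split_ifs at heq <;> omega

lemma add_one_le_of_isRanking_twoCliques {n k : ℕ} (hn : 1 ≤ n) {f : Fin n ⊕ Fin n → ℕ}
    (hf : IsRanking (twoCliques n) k f) : n + 1 ≤ k := by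
  by_contra! hk
  have hne : (Finset.univ : Finset (Fin n)).Nonempty := ⟨⟨0, hn⟩, Finset.mem_univ _⟩
  have hW : (twoCliques n).IsClique ↑(Finset.univ.map .inl : Finset (Fin n ⊕ Fin n)) := by
    simpa using twoCliques.isClique_range_inl
  have hV : (twoCliques n).IsClique ↑(Finset.univ.map .inr : Finset (Fin n ⊕ Fin n)) := by
    simpa using twoCliques.isClique_range_inr
  obtain ⟨w, hw, hfw⟩ := hf.exists_eq_of_isClique hW hne.map (by simp; omega)
  obtain ⟨v, hv, hfv⟩ := hf.exists_eq_of_isClique hV hne.map (by simp; omega)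
  obtain ⟨i, -, rfl⟩ := Finset.mem_map.1 hw
  obtain ⟨j, -, rfl⟩ := Finset.mem_map.1 hv
  exact Sum.inl_ne_inr (hf.eq_of_reachable (twoCliques.reachable_inl_inr i j) hfw hfv)

/-- for every integer `n ≥ 2`, the rank number of `G_n`, two disjoint
copies of `K_n` joined by a single edge, equals `n + 1`. -/
theorem rankNumber_twoCliques (n : ℕ) (hn : 2 ≤ n) :
    rankNumber (twoCliques n) = n + 1 :=
  rankNumber_eq_of_isRanking (isRanking_twoCliquesLabel n)
    fun _ _ hf => add_one_le_of_isRanking_twoCliques (by omega) hf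
end
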